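/- Let S = ⟨qm₁,…,qm_d, pn₁,…,pn_k⟩ be a specific gluing of S₁ and S₂. Then the multiplicity of S equals q·m₁, i.e. m(S) = qm₁. -/

import Mathlib

open scoped Pointwise

/-- `S ⊆ ℕ` is a numerical semigroup: it contains `0`, is closed under
addition, and has finite complement in `ℕ`. -/
def IsNumSgp (S : Set ℕ) : Prop :=
  (0 : ℕ) ∈ S ∧ (∀ a ∈ S, ∀ b ∈ S, a + b ∈ S) ∧ {x : ℕ | x ∉ S}.Finite

/-- `nM S t` is the `t`-fold sumset of the maximal ideal `M = S \ {0}`,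
with the convention `nM S 0 = S`. -/
def nM (S : Set ℕ) : ℕ → Set ℕ
  | 0 => S
  | t + 1 => (S \ {0}) + nM S t

/-- the order of `s` with respect to `S` : the largest `t` with `s ∈ tM`. -/
noncomputable def ordS (S : Set ℕ) (s : ℕ) : ℕ := sSup {t : ℕ | s ∈ nM S t}

/-- the multiplicity of `S` : its least nonzero element. -/
noncomputable def mult (S : Set ℕ) : ℕ := sInf {x : ℕ | x ∈ S ∧ x ≠ 0}

/-- the Apéry set of `S` with respect to `x` : elements `s ∈ S` with `s - x ∉ S`. -/
def Ap (S : Set ℕ) (x : ℕ) : Set ℕ := {s : ℕ | s ∈ S ∧ ¬ ∃ t ∈ S, s = t + x}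

/-- membership of an integer in (the image in `ℤ` of) `S`. -/
def zmem (S : Set ℕ) (z : ℤ) : Prop := ∃ t ∈ S, (t : ℤ) = z

/-- the Frobenius number of `S` : the largest integer not in `S`. -/
noncomputable def Frob (S : Set ℕ) : ℤ := sSup {z : ℤ | ¬ zmem S z}

/-- `S` is symmetric: for every integer `z`, `z ∈ S` iff `F(S) - z ∉ S`. -/
def IsSymmetric (S : Set ℕ) : Prop := ∀ z : ℤ, zmem S z ↔ ¬ zmem S (Frob S - z)

/-- the set of maximal elements of `Ap S x` with respect to the order
`u ⪯ v` iff `v = u + z` for some `z ∈ S`. -/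
def MaxAp (S : Set ℕ) (x : ℕ) : Set ℕ :=
  {w : ℕ | w ∈ Ap S x ∧ ∀ y ∈ Ap S x, (∃ z ∈ S, y = w + z) → y = w}

/-- the set of maximal elements of `Ap S x` with respect to the order
`u ⪯_M v` iff `v = u + z` for some `z ∈ S` with `ord(v) = ord(u) + ord(z)`. -/
def MaxMAp (S : Set ℕ) (x : ℕ) : Set ℕ :=
  {w : ℕ | w ∈ Ap S x ∧ ∀ y ∈ Ap S x,
    (∃ z ∈ S, y = w + z ∧ ordS S y = ordS S w + ordS S z) → y = w}

/-- `S` is M-pure with respect to `x` : all maximal elements of `Ap S x`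
under `⪯_M` have the same order. -/
def MPureWrt (S : Set ℕ) (x : ℕ) : Prop :=
  ∀ w ∈ MaxMAp S x, ∀ w' ∈ MaxMAp S x, ordS S w = ordS S w'

/-- `S` is M-pure : it is M-pure with respect to its multiplicity. -/
def MPure (S : Set ℕ) : Prop := MPureWrt S (mult S)

/-- `β_i(x)` : the number of elements of `Ap S x` of order `i`. -/
noncomputable def betaS (S : Set ℕ) (x i : ℕ) : ℕ := {w ∈ Ap S x | ordS S w = i}.ncard

/-- `d(x)` : the maximal order of an element of `Ap S x`. -/
noncomputable def dS (S : Set ℕ) (x : ℕ) : ℕ := sSup (ordS S '' Ap S x)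

/-- the reduction number of `S` : the least `r` with `(r+1)M = m(S) + rM`. -/
noncomputable def redNum (S : Set ℕ) : ℕ :=
  sInf {r : ℕ | nM S (r + 1) = (fun y => mult S + y) '' nM S r}

/-- `l_x(S) = max { ord(s+x) - ord(x) - ord(s) : s ∈ S, ord(s) ≤ r }`. -/
noncomputable def lS (S : Set ℕ) (x : ℕ) : ℕ :=
  sSup {t : ℕ | ∃ s ∈ S, ordS S s ≤ redNum S ∧ t = ordS S (s + x) - ordS S x - ordS S s}

/-- the Hilbert function of `S`. -/
noncomputable def HilbS (S : Set ℕ) (t : ℕ) : ℕ := (nM S t \ nM S (t + 1)).ncard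

/-- The data of a gluing `S = ⟨q m₁, …, q m_d, p n₁, …, p n_k⟩` of two numerical
semigroups `S₁ = ⟨m₁, …, m_d⟩` and `S₂ = ⟨n₁, …, n_k⟩`, minimally generated by
`m₁ < ⋯ < m_d` and `n₁ < ⋯ < n_k`, where `p ∈ S₁ \ {m₁, …, m_d}`,
`q ∈ S₂ \ {n₁, …, n_k}` and `gcd(p, q) = 1`. -/
structure Gluing where
  d : ℕ
  k : ℕ
  hd : 0 < d
  hk : 0 < k
  m : Fin d → ℕ
  n : Fin k → ℕ
  p : ℕ
  q : ℕ
  hm : StrictMono m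
  hn : StrictMono n
  hmin₁ : ∀ i, m i ∉ AddSubmonoid.closure (Set.range m \ {m i})
  hmin₂ : ∀ j, n j ∉ AddSubmonoid.closure (Set.range n \ {n j})
  hnum₁ : IsNumSgp (AddSubmonoid.closure (Set.range m) : Set ℕ)
  hnum₂ : IsNumSgp (AddSubmonoid.closure (Set.range n) : Set ℕ)
  hp : p ∈ AddSubmonoid.closure (Set.range m)
  hq : q ∈ AddSubmonoid.closure (Set.range n)
  hpm : p ∉ Set.range m
  hqn : q ∉ Set.range n
  hpq : Nat.gcd p q = 1

/-- the numerical semigroup `S₁ = ⟨m₁, …, m_d⟩`. -/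
def Gluing.S₁ (G : Gluing) : Set ℕ := (AddSubmonoid.closure (Set.range G.m) : Set ℕ)

/-- the numerical semigroup `S₂ = ⟨n₁, …, n_k⟩`. -/
def Gluing.S₂ (G : Gluing) : Set ℕ := (AddSubmonoid.closure (Set.range G.n) : Set ℕ)

/-- the glued numerical semigroup `S = ⟨q m₁, …, q m_d, p n₁, …, p n_k⟩`. -/
def Gluing.S (G : Gluing) : Set ℕ :=
  (AddSubmonoid.closure
    ((fun x => G.q * x) '' Set.range G.m ∪ (fun x => G.p * x) '' Set.range G.n) : Set ℕ)

/-- the smallest generator `m₁` of `S₁`. -/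
def Gluing.m₁ (G : Gluing) : ℕ := G.m ⟨0, G.hd⟩

/-- the smallest generator `n₁` of `S₂`. -/
def Gluing.n₁ (G : Gluing) : ℕ := G.n ⟨0, G.hk⟩

/-- the gluing is specific if `ord_{S₂}(q) + l_q(S₂) ≤ ord_{S₁}(p)`. -/
def Gluing.Specific (G : Gluing) : Prop := ordS G.S₂ G.q + lS G.S₂ G.q ≤ ordS G.S₁ G.p

/-- the gluing is nice if `q = a n₁` for some `1 < a ≤ ord_{S₁}(p)`. -/
def Gluing.Nice (G : Gluing) : Prop := ∃ a : ℕ, 1 < a ∧ a ≤ ordS G.S₁ G.p ∧ G.q = a * G.n₁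

/-!
Since `S` is generated by the `q mᵢ` and the `p nⱼ`, it suffices to show `q m₁ ≤ p nⱼ`.
With `u = ord_{S₁}(p)` we have `u m₁ ≤ p`, so it is enough to show `q ≤ u n` for `n = m(S₂) ≤ nⱼ`,
and by specificity it suffices that `q ≤ (ord(q) + l_q) n`. For this pick `s` in the Apéry set of
`S₂` with respect to `n` such that `q + s = D n`. Apéry elements have order at most the reduction
number, so `ord(s + q) - ord(q) - ord(s) ≤ l_q`; moreover `ord(s + q) ≥ D` and `ord(s) · n ≤ s`,
whence `q = D n - s ≤ (D - ord(s)) n ≤ (ord(q) + l_q) n`.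
-/

section nM

variable {S : Set ℕ}

lemma mem_nM_succ {t x : ℕ} : x ∈ nM S (t + 1) ↔ ∃ a ∈ S \ {0}, ∃ y ∈ nM S t, a + y = x :=
  Set.mem_add

lemma mul_le_of_mem_nM {g : ℕ} (hg : ∀ y ∈ S, y ≠ 0 → g ≤ y) :
    ∀ {t x : ℕ}, x ∈ nM S t → t * g ≤ x := by
  intro t
  induction t with
  | zero => simp
  | succ t ih =>
    intro x hx
    obtain ⟨a, ⟨ha, ha0⟩, y, hy, rfl⟩ := mem_nM_succ.1 hx
    have := hg a ha ha0
    have := ih hy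
    rw [add_one_mul]
    omega

lemma le_of_mem_nM {t x : ℕ} (hx : x ∈ nM S t) : t ≤ x := by
  simpa using mul_le_of_mem_nM (fun y _ hy => Nat.one_le_iff_ne_zero.2 hy) hx

lemma bddAbove_setOf_mem_nM (x : ℕ) : BddAbove {t | x ∈ nM S t} :=
  ⟨x, fun _ ht => le_of_mem_nM ht⟩

lemma mem_nM_ordS {x : ℕ} (hx : x ∈ S) : x ∈ nM S (ordS S x) :=
  Nat.sSup_mem ⟨0, hx⟩ (bddAbove_setOf_mem_nM x)

lemma le_ordS {t x : ℕ} (hx : x ∈ nM S t) : t ≤ ordS S x :=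
  le_csSup (bddAbove_setOf_mem_nM x) hx

lemma ordS_le_self (x : ℕ) : ordS S x ≤ x :=
  csSup_le' fun _ ht => le_of_mem_nM ht

lemma mul_mem_nM {a : ℕ} (h0 : 0 ∈ S) (ha : a ∈ S) (ha0 : a ≠ 0) :
    ∀ k, k * a ∈ nM S k
  | 0 => by simpa [nM] using h0
  | k + 1 => mem_nM_succ.2 ⟨a, ⟨ha, ha0⟩, k * a, mul_mem_nM h0 ha ha0 k, by ring⟩

lemma mem_nM_of_mul_add_le {n c : ℕ} (hn : n ∈ S) (hn0 : n ≠ 0) (hc : ∀ x, c ≤ x → x ∈ S) :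
    ∀ {t x : ℕ}, t * n + c ≤ x → x ∈ nM S t := by
  intro t
  induction t with
  | zero => exact fun hx => hc _ (by simpa using hx)
  | succ t ih =>
    intro x hx
    rw [add_one_mul] at hx
    exact mem_nM_succ.2 ⟨n, ⟨hn, hn0⟩, x - n, ih (by omega), by omega⟩

lemma mem_nM_succ_cases {n : ℕ} (hn : ∀ y ∈ S, y ≠ 0 → n ≤ y) :
    ∀ {t x : ℕ}, x ∈ nM S (t + 1) → (∃ y ∈ nM S t, x = n + y) ∨ (t + 1) * (n + 1) ≤ x := by
  intro t
  induction t with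
  | zero =>
    intro x hx
    obtain ⟨a, ⟨ha, ha0⟩, y, hy, rfl⟩ := mem_nM_succ.1 hx
    by_cases han : a = n
    · exact .inl ⟨y, hy, han ▸ rfl⟩
    · have := hn a ha ha0
      right
      omega
  | succ t ih =>
    intro x hx
    obtain ⟨a, ⟨ha, ha0⟩, y, hy, rfl⟩ := mem_nM_succ.1 hx
    by_cases han : a = n
    · exact .inl ⟨y, hy, han ▸ rfl⟩
    have := hn a ha ha0
    rcases ih hy with ⟨y', hy', rfl⟩ | hy
    · exact .inl ⟨a + y', mem_nM_succ.2 ⟨a, ⟨ha, ha0⟩, y', hy', rfl⟩, by omega⟩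
    · right
      rw [add_one_mul (t + 1)]
      omega

end nM

lemma mult_le {S : Set ℕ} {x : ℕ} (hx : x ∈ S) (hx0 : x ≠ 0) : mult S ≤ x :=
  Nat.sInf_le ⟨hx, hx0⟩

lemma le_of_mem_closure {A : Set ℕ} {a x : ℕ} (h : ∀ b ∈ A, b ≠ 0 → a ≤ b)
    (hx : x ∈ AddSubmonoid.closure A) (hx0 : x ≠ 0) : a ≤ x := by
  induction hx using AddSubmonoid.closure_induction with
  | mem b hb => exact h b hb hx0
  | zero => exact absurd rfl hx0
  | add y z _ _ ihy ihz =>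
    rcases Nat.eq_zero_or_pos y with rfl | hy
    · simpa using ihz (by simpa using hx0)
    · have := ihy hy.ne'
      omega

lemma mult_closure_eq {A : Set ℕ} {a : ℕ} (ha : a ∈ A) (ha0 : a ≠ 0)
    (h : ∀ b ∈ A, b ≠ 0 → a ≤ b) : mult (AddSubmonoid.closure A : Set ℕ) = a :=
  le_antisymm (mult_le (AddSubmonoid.subset_closure ha) ha0)
    (le_csInf ⟨a, AddSubmonoid.subset_closure ha, ha0⟩ fun _ hb => le_of_mem_closure h hb.1 hb.2)

namespace IsNumSgp

variable {S : Set ℕ}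

lemma exists_forall_ge_mem (hS : IsNumSgp S) : ∃ c, ∀ x, c ≤ x → x ∈ S := by
  obtain ⟨b, hb⟩ := hS.2.2.bddAbove
  refine ⟨b + 1, fun x hx => by_contra fun h => ?_⟩
  have := hb h
  omega

lemma mul_mem (hS : IsNumSgp S) {a : ℕ} (ha : a ∈ S) : ∀ k, k * a ∈ S
  | 0 => by simpa using hS.1
  | k + 1 => by
    rw [add_one_mul]
    exact hS.2.1 _ (hS.mul_mem ha k) _ ha

lemma antitone_nM (hS : IsNumSgp S) : Antitone (nM S) := by
  refine antitone_nat_of_succ_le fun t => ?_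
  induction t with
  | zero =>
    intro x hx
    obtain ⟨a, ⟨ha, -⟩, y, hy, rfl⟩ := mem_nM_succ.1 hx
    exact hS.2.1 a ha y hy
  | succ t ih =>
    intro x hx
    obtain ⟨a, ha, y, hy, rfl⟩ := mem_nM_succ.1 hx
    exact mem_nM_succ.2 ⟨a, ha, y, ih hy, rfl⟩

lemma nM_subset (hS : IsNumSgp S) (t : ℕ) : nM S t ⊆ S :=
  hS.antitone_nM (Nat.zero_le t)

lemma nonempty_nonzero (hS : IsNumSgp S) : {x | x ∈ S ∧ x ≠ 0}.Nonempty := by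
  obtain ⟨c, hc⟩ := hS.exists_forall_ge_mem
  exact ⟨c + 1, hc _ (by omega), by omega⟩

lemma mult_mem (hS : IsNumSgp S) : mult S ∈ S :=
  (Nat.sInf_mem hS.nonempty_nonzero).1

lemma mult_ne_zero (hS : IsNumSgp S) : mult S ≠ 0 :=
  (Nat.sInf_mem hS.nonempty_nonzero).2

lemma nM_succ_eq_image (hS : IsNumSgp S) {c : ℕ} (hc : ∀ x, c ≤ x → x ∈ S) :
    nM S (c + 1) = (fun y => mult S + y) '' nM S c := by
  refine Set.Subset.antisymm (fun x hx => ?_) ?_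
  · rcases mem_nM_succ_cases (fun _ => mult_le) hx with ⟨y, hy, rfl⟩ | hlarge
    · exact ⟨y, hy, rfl⟩
    · have hexp : (c + 1) * (mult S + 1) = c * mult S + mult S + c + 1 := by ring
      exact ⟨x - mult S, mem_nM_of_mul_add_le hS.mult_mem hS.mult_ne_zero hc (by omega),
        show mult S + (x - mult S) = x by omega⟩
  · rintro _ ⟨y, hy, rfl⟩
    exact mem_nM_succ.2 ⟨mult S, ⟨hS.mult_mem, hS.mult_ne_zero⟩, y, hy, rfl⟩

lemma nM_redNum_succ (hS : IsNumSgp S) :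
    nM S (redNum S + 1) = (fun y => mult S + y) '' nM S (redNum S) := by
  obtain ⟨c, hc⟩ := hS.exists_forall_ge_mem
  exact Nat.sInf_mem (s := {r | nM S (r + 1) = (fun y => mult S + y) '' nM S r})
    ⟨c, hS.nM_succ_eq_image hc⟩

lemma ordS_le_redNum_of_mem_Ap (hS : IsNumSgp S) {s : ℕ} (hs : s ∈ Ap S (mult S)) :
    ordS S s ≤ redNum S := by
  by_contra! h
  have hmem : s ∈ nM S (redNum S + 1) := hS.antitone_nM h (mem_nM_ordS hs.1)
  rw [hS.nM_redNum_succ] at hmem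
  obtain ⟨y, hy, rfl⟩ := hmem
  exact hs.2 ⟨y, hS.nM_subset _ hy, add_comm _ _⟩

lemma sub_le_lS (hS : IsNumSgp S) {s x : ℕ} (hs : s ∈ S) (hord : ordS S s ≤ redNum S) :
    ordS S (s + x) - ordS S x - ordS S s ≤ lS S x := by
  obtain ⟨c, hc⟩ := hS.exists_forall_ge_mem
  have hsmall : ∀ s', ordS S s' ≤ redNum S → s' < (redNum S + 1) * mult S + c := by
    intro s' hord'
    by_contra! hlarge
    have := le_ordS (mem_nM_of_mul_add_le hS.mult_mem hS.mult_ne_zero hc hlarge)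
    omega
  refine le_csSup ⟨(redNum S + 1) * mult S + c + x, ?_⟩ ⟨s, hs, hord, rfl⟩
  rintro _ ⟨s', -, hord', rfl⟩
  have := hsmall s' hord'
  have := ordS_le_self (S := S) (s' + x)
  omega

lemma exists_mem_Ap_dvd_add (hS : IsNumSgp S) {n q : ℕ} (hn : 0 < n) (hq : q ∈ S) :
    ∃ s ∈ Ap S n, n ∣ q + s := by
  classical
  have hex : ∃ x, x ∈ S ∧ n ∣ q + x := by
    obtain ⟨k, rfl⟩ := Nat.exists_eq_add_of_lt hn
    exact ⟨k * q, hS.mul_mem hq _, ⟨q, by ring⟩⟩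
  set s := Nat.find hex
  refine ⟨s, ⟨(Nat.find_spec hex).1, ?_⟩, (Nat.find_spec hex).2⟩
  rintro ⟨t, ht, hst⟩
  have hdvd : n ∣ q + t := by
    have := (Nat.find_spec hex).2
    rwa [show Nat.find hex = s from rfl, hst, ← add_assoc, Nat.dvd_add_self_right] at this
  have := Nat.find_min' hex ⟨ht, hdvd⟩
  omega

theorem le_ordS_add_lS_mul_mult (hS : IsNumSgp S) {q : ℕ} (hq : q ∈ S) :
    q ≤ (ordS S q + lS S q) * mult S := by
  obtain ⟨s, hAp, D, hD⟩ := hS.exists_mem_Ap_dvd_add (Nat.pos_of_ne_zero hS.mult_ne_zero) hq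
  rw [mul_comm] at hD
  have hordD : D ≤ ordS S (s + q) :=
    le_ordS (by rw [add_comm, hD]; exact mul_mem_nM hS.1 hS.mult_mem hS.mult_ne_zero D)
  have hl := hS.sub_le_lS (x := q) hAp.1 (hS.ordS_le_redNum_of_mem_Ap hAp)
  have hs : ordS S s * mult S ≤ s := mul_le_of_mem_nM (fun _ => mult_le) (mem_nM_ordS hAp.1)
  calc q ≤ (D - ordS S s) * mult S := by rw [Nat.sub_mul]; omega
    _ ≤ (ordS S q + lS S q) * mult S := Nat.mul_le_mul_right _ (by omega)

end IsNumSgp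

namespace Gluing

variable (G : Gluing)

lemma m_ne_zero (i : Fin G.d) : G.m i ≠ 0 :=
  fun h => G.hmin₁ i (h ▸ zero_mem _)

lemma n_ne_zero (j : Fin G.k) : G.n j ≠ 0 :=
  fun h => G.hmin₂ j (h ▸ zero_mem _)

lemma m₁_le (i : Fin G.d) : G.m₁ ≤ G.m i :=
  G.hm.monotone (Fin.le_def.2 (Nat.zero_le _))

lemma m₁_le_of_mem_S₁ {x : ℕ} (hx : x ∈ G.S₁) (hx0 : x ≠ 0) : G.m₁ ≤ x :=
  le_of_mem_closure (by rintro _ ⟨i, rfl⟩ -; exact G.m₁_le i) hx hx0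

lemma ordS_p_mul_m₁_le : ordS G.S₁ G.p * G.m₁ ≤ G.p :=
  mul_le_of_mem_nM (fun _ => G.m₁_le_of_mem_S₁) (mem_nM_ordS G.hp)

/-- If `q = 0` then `gcd(p, q) = 1` forces `p = 1 = m₁`, which is a generator. -/
lemma q_ne_zero : G.q ≠ 0 := by
  intro hq
  have hp : G.p = 1 := by simpa [hq] using G.hpq
  have hm₁ : G.m₁ ≤ 1 := hp ▸ G.m₁_le_of_mem_S₁ G.hp (by omega)
  have := G.m_ne_zero ⟨0, G.hd⟩
  exact G.hpm ⟨⟨0, G.hd⟩, show G.m₁ = G.p by unfold m₁ at hm₁ ⊢; omega⟩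

end Gluing

/-- for a specific gluing `S` of `S₁` and `S₂`, `m(S) = q·m₁`. -/
theorem stmt13 (G : Gluing) (hG : G.Specific) :
    mult G.S = G.q * G.m₁ := by
  have hS₂ : IsNumSgp G.S₂ := G.hnum₂
  have hq_le : G.q ≤ ordS G.S₁ G.p * mult G.S₂ :=
    (hS₂.le_ordS_add_lS_mul_mult G.hq).trans (Nat.mul_le_mul_right _ hG)
  refine mult_closure_eq (Or.inl ⟨G.m₁, ⟨_, rfl⟩, rfl⟩)
    (mul_ne_zero G.q_ne_zero (G.m_ne_zero _)) ?_
  rintro _ (⟨_, ⟨i, rfl⟩, rfl⟩ | ⟨_, ⟨j, rfl⟩, rfl⟩) -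
  · exact Nat.mul_le_mul_left _ (G.m₁_le i)
  · calc G.q * G.m₁ ≤ ordS G.S₁ G.p * mult G.S₂ * G.m₁ := Nat.mul_le_mul_right _ hq_le
      _ = ordS G.S₁ G.p * G.m₁ * mult G.S₂ := by ring
      _ ≤ G.p * mult G.S₂ := Nat.mul_le_mul_right _ G.ordS_p_mul_m₁_le
      _ ≤ G.p * G.n j :=
        Nat.mul_le_mul_left _ (mult_le (AddSubmonoid.subset_closure ⟨j, rfl⟩) (G.n_ne_zero j))
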